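/- For every p ∈ (1, 2] there exists a constant c_p ∈ (0, 2), independent of the dimension and of the block decomposition, such that for every n ∈ ℕ, every block decomposition k of {1, …, n}, every r > 0, and every u ∈ ℝ^n with ‖u‖_{p,k,n} ≤ 2r, the volume of the intersection of the two superballs satisfies vol(B^n_{p,k}(u, 2r) ∩ B^n_{p,k}(0, ‖u‖_{p,k,n})) ≤ (c_p/2)^n · vol(B^n_{p,k}(0, 2r)). -/

import Mathlib

open MeasureTheory Filter
open scoped BigOperators ENNReal

/-- The superball norm on `ℝ^n` associated to exponent `p` and a block decomposition
given by `m` blocks with endpoints `k 0 = 0 < k 1 < ⋯ < k m = n`: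
`‖x‖ = (∑_{j<m} ‖(x_{k j}, …, x_{k (j+1) - 1})‖₂^p)^(1/p)`. -/
noncomputable def superNorm (p : ℝ) {n : ℕ} (m : ℕ) (k : ℕ → ℕ) (x : Fin n → ℝ) : ℝ :=
  (∑ j ∈ Finset.range m,
      (Real.sqrt (∑ i : Fin n, if k j ≤ (i : ℕ) ∧ (i : ℕ) < k (j + 1) then x i ^ 2 else 0)) ^ p)
    ^ (1 / p)

/-- `k` is a block decomposition of `{1, …, n}` into `m` blocks. -/
def IsBlockDecomp (n m : ℕ) (k : ℕ → ℕ) : Prop :=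
  0 < m ∧ k 0 = 0 ∧ k m = n ∧ ∀ j < m, k j < k (j + 1)

/-- The superball with center `c` and radius `r`. -/
noncomputable def superBall (p : ℝ) {n : ℕ} (m : ℕ) (k : ℕ → ℕ) (c : Fin n → ℝ) (r : ℝ) :
    Set (Fin n → ℝ) :=
  {y | superNorm p m k (y - c) ≤ r}

/-- `P` is the set of centers of a translative packing of superballs of radius `r`. -/
def IsSuperballPacking (p : ℝ) {n : ℕ} (m : ℕ) (k : ℕ → ℕ) (r : ℝ)
    (P : Set (Fin n → ℝ)) : Prop :=
  ∀ x ∈ P, ∀ y ∈ P, x ≠ y → 2 * r ≤ superNorm p m k (x - y)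

/-- The translative packing density of superballs of radius `r` in `ℝ^n`. -/
noncomputable def packingDensity (p : ℝ) (n m : ℕ) (k : ℕ → ℕ) (r : ℝ) : ℝ :=
  limsup (fun R : ℝ =>
      ⨆ P : {P : Set (Fin n → ℝ) // IsSuperballPacking p m k r P},
        (volume ((⋃ x ∈ P.1, superBall p m k x r) ∩ superBall p m k 0 R)).toReal /
          (volume (superBall p m k (0 : Fin n → ℝ) R)).toReal) atTop

/-- The canonical hard superball model partition function `Ẑ_S(t)`. -/
noncomputable def Zhat (p : ℝ) {n : ℕ} (m : ℕ) (k : ℕ → ℕ) (r : ℝ) (S : Set (Fin n → ℝ))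
    (t : ℕ) : ℝ :=
  ((t.factorial : ℝ))⁻¹ *
    ∫ x : Fin t → Fin n → ℝ in Set.univ.pi fun _ => S,
      Set.indicator
        {y : Fin t → Fin n → ℝ | ∀ i j : Fin t, i ≠ j → 2 * r ≤ superNorm p m k (y i - y j)}
        (fun _ => (1 : ℝ)) x

/-- The grand canonical hard superball model partition function `Z_S(λ)`. -/
noncomputable def Zgc (p : ℝ) {n : ℕ} (m : ℕ) (k : ℕ → ℕ) (r : ℝ) (S : Set (Fin n → ℝ))
    (lam : ℝ) : ℝ :=
  ∑' t : ℕ, lam ^ t * Zhat p m k r S t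

/-- The expected packing density `α_S(λ)` of the hard superball model. -/
noncomputable def alphaDen (p : ℝ) {n : ℕ} (m : ℕ) (k : ℕ → ℕ) (r : ℝ) (S : Set (Fin n → ℝ))
    (lam : ℝ) : ℝ :=
  lam * deriv (Zgc p m k r S) lam / ((volume S).toReal * Zgc p m k r S lam)

/-!
The superball norm is 2-uniformly convex:
`(‖x + y‖² + (p - 1)/2 ‖x - y‖²)^(p/2) ≤ 2^(p-1) (‖x‖^p + ‖y‖^p)`.
On a single Euclidean block this follows from the parallelogram law and a two-point inequality
for reals, and the blocks are recombined by superadditivity of the `ℓ^(p/2)` quasinorm.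
Applied to `y` and `y - u`, it shows that a point `y` of both balls satisfies
`‖y - u/2‖² ≤ (2r)² - (p - 1)/8 ‖u‖²`. Hence, with `κ = (1 + (p - 1)/8)^(-1/2) < 1`, the
intersection lies in a ball of radius `κ · 2r`: around `u/2` if `‖u‖ > κ · 2r`, around `0`
otherwise. Scaling the ball gives the bound with `c = 2κ`.
-/

open Set
open scoped Pointwise

theorem two_add_mul_sq_le_one_add_rpow_add_one_sub_rpow {p t : ℝ} (hp1 : 1 ≤ p) (hp2 : p ≤ 2)
    (ht : t ∈ Icc (-1 : ℝ) 1) :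
    2 + p * (p - 1) / 2 * t ^ 2 ≤ (1 + t) ^ p + (1 - t) ^ p := by
  set c := p * (p - 1) / 4
  have hconv : ConvexOn ℝ (Icc (-1 : ℝ) 1) fun x => (1 + x) ^ p - c * x ^ 2 := by
    refine convexOn_of_hasDerivWithinAt2_nonneg (convex_Icc _ _)
      (f' := fun x => p * (1 + x) ^ (p - 1) - 2 * c * x)
      (f'' := fun x => p * (p - 1) * (1 + x) ^ (p - 2) - 2 * c) ?_ ?_ ?_ ?_
    · exact ((continuous_const.add continuous_id).rpow_const
        fun _ => Or.inr (by linarith)).continuousOn.sub (by fun_prop)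
    · rw [interior_Icc]
      intro x _
      have := (((hasDerivAt_id x).const_add 1).rpow_const (p := p) (Or.inr hp1)).sub
        ((hasDerivAt_pow 2 x).const_mul c)
      exact (this.congr_deriv (by simp only [id]; push_cast; ring)).hasDerivWithinAt
    · rw [interior_Icc]
      intro x hx
      have := ((((hasDerivAt_id x).const_add 1).rpow_const (p := p - 1)
        (Or.inl (by simp only [id]; linarith [hx.1]))).const_mul p).sub
          ((hasDerivAt_id x).const_mul (2 * c))
      refine (this.congr_deriv ?_).hasDerivWithinAt
      rw [show p - 1 - 1 = p - 2 by ring]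
      simp only [id, c]
      ring
    · rw [interior_Icc]
      intro x hx
      have h1 : (2 : ℝ)⁻¹ ≤ (1 + x) ^ (p - 2) := by
        calc (2 : ℝ)⁻¹ = 2 ^ (-1 : ℝ) := (Real.rpow_neg_one 2).symm
          _ ≤ 2 ^ (p - 2) := Real.rpow_le_rpow_of_exponent_le one_le_two (by linarith)
          _ ≤ (1 + x) ^ (p - 2) :=
            Real.rpow_le_rpow_of_nonpos (by linarith [hx.1]) (by linarith [hx.2]) (by linarith)
      have h2 : 0 ≤ p * (p - 1) := mul_nonneg (by linarith) (by linarith)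
      simp only [c]
      nlinarith
  have hmid := hconv.2 ht (show -t ∈ Icc (-1 : ℝ) 1 from ⟨by linarith [ht.2], by linarith [ht.1]⟩)
    (by norm_num : (0 : ℝ) ≤ 1 / 2) (by norm_num : (0 : ℝ) ≤ 1 / 2) (by norm_num)
  simp only [smul_eq_mul] at hmid
  rw [show 1 / 2 * t + 1 / 2 * -t = (0 : ℝ) by ring, ← sub_eq_add_neg] at hmid
  simp only [add_zero, Real.one_rpow, c] at hmid
  nlinarith

theorem sq_rpow_div_two {x : ℝ} (hx : 0 ≤ x) (p : ℝ) : (x ^ 2) ^ (p / 2) = x ^ p := by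
  rw [← Real.rpow_natCast_mul hx, Nat.cast_ofNat, mul_div_cancel₀ _ two_ne_zero]

theorem one_add_mul_sq_rpow_le {p t : ℝ} (hp1 : 1 ≤ p) (hp2 : p ≤ 2) (ht : t ∈ Icc (-1 : ℝ) 1) :
    (1 + (p - 1) / 2 * t ^ 2) ^ (p / 2) ≤ ((1 + t) ^ p + (1 - t) ^ p) / 2 := by
  calc (1 + (p - 1) / 2 * t ^ 2) ^ (p / 2) ≤ 1 + p / 2 * ((p - 1) / 2 * t ^ 2) :=
        rpow_one_add_le_one_add_mul_self (by nlinarith) (by linarith) (by linarith)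
    _ ≤ ((1 + t) ^ p + (1 - t) ^ p) / 2 := by
        linarith [two_add_mul_sq_le_one_add_rpow_add_one_sub_rpow hp1 hp2 ht]

theorem add_sq_add_mul_sub_sq_rpow_le {p A B : ℝ} (hp1 : 1 ≤ p) (hp2 : p ≤ 2) (hA : 0 ≤ A)
    (hB : 0 ≤ B) :
    ((A + B) ^ 2 + (p - 1) / 2 * (A - B) ^ 2) ^ (p / 2) ≤ 2 ^ (p - 1) * (A ^ p + B ^ p) := by
  have hp0 : 0 < p := by linarith
  rcases (add_nonneg hA hB).eq_or_lt with hAB | hAB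
  · obtain ⟨rfl, rfl⟩ : A = 0 ∧ B = 0 := ⟨by linarith, by linarith⟩
    simp [Real.zero_rpow hp0.ne', Real.zero_rpow (by positivity : p / 2 ≠ 0)]
  -- write `A = m (1 + t)`, `B = m (1 - t)` and scale out `m`
  set m := (A + B) / 2
  set t := (A - B) / (A + B)
  have hm : 0 < m := by positivity
  have hA' : A = m * (1 + t) := by simp only [m, t]; field_simp; ring
  have hB' : B = m * (1 - t) := by simp only [m, t]; field_simp; ring
  have ht : t ∈ Icc (-1 : ℝ) 1 := by
    constructor <;> [rw [le_div_iff₀ hAB]; rw [div_le_iff₀ hAB]] <;> linarith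
  have h1t : 0 ≤ 1 + t := by linarith [ht.1]
  have h1t' : 0 ≤ 1 - t := by linarith [ht.2]
  have hL : (A + B) ^ 2 + (p - 1) / 2 * (A - B) ^ 2 =
      (2 * m) ^ 2 * (1 + (p - 1) / 2 * t ^ 2) := by
    rw [hA', hB']; ring
  have hR : 2 ^ (p - 1) * (A ^ p + B ^ p) =
      (2 * m) ^ p * (((1 + t) ^ p + (1 - t) ^ p) / 2) := by
    rw [hA', hB', Real.mul_rpow hm.le h1t, Real.mul_rpow hm.le h1t',
      Real.mul_rpow zero_le_two hm.le, Real.rpow_sub_one two_ne_zero]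
    ring
  rw [hL, hR, Real.mul_rpow (by positivity) (by nlinarith), sq_rpow_div_two (by positivity)]
  exact mul_le_mul_of_nonneg_left (one_add_mul_sq_rpow_le hp1 hp2 ht) (by positivity)

theorem Real.add_Lp_le_Lp_add_of_le_one {ι : Type*} (s : Finset ι) {q : ℝ} (hq0 : 0 < q)
    (hq1 : q ≤ 1) {u v : ι → ℝ} (hu : ∀ i ∈ s, 0 ≤ u i) (hv : ∀ i ∈ s, 0 ≤ v i) :
    (∑ i ∈ s, u i ^ q) ^ q⁻¹ + (∑ i ∈ s, v i ^ q) ^ q⁻¹ ≤ (∑ i ∈ s, (u i + v i) ^ q) ^ q⁻¹ := by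
  have : Fact (1 ≤ ENNReal.ofReal q⁻¹) :=
    ⟨by simpa using ENNReal.ofReal_le_ofReal ((one_le_inv₀ hq0).2 hq1)⟩
  have hP : (ENNReal.ofReal q⁻¹).toReal = q⁻¹ := ENNReal.toReal_ofReal (by positivity)
  have norm_toLp {a b : ℝ} (ha : 0 ≤ a) (hb : 0 ≤ b) :
      ‖WithLp.toLp (ENNReal.ofReal q⁻¹) (a ^ q, b ^ q)‖ = (a + b) ^ q := by
    rw [WithLp.prod_norm_eq_add (by rw [hP]; positivity), hP, one_div, inv_inv]
    simp only [WithLp.toLp_fst, WithLp.toLp_snd, Real.norm_eq_abs,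
      abs_of_nonneg (Real.rpow_nonneg ha q), abs_of_nonneg (Real.rpow_nonneg hb q),
      Real.rpow_rpow_inv ha hq0.ne', Real.rpow_rpow_inv hb hq0.ne']
  have hU : 0 ≤ ∑ i ∈ s, u i ^ q := Finset.sum_nonneg fun i hi => Real.rpow_nonneg (hu i hi) q
  have hV : 0 ≤ ∑ i ∈ s, v i ^ q := Finset.sum_nonneg fun i hi => Real.rpow_nonneg (hv i hi) q
  -- Minkowski's inequality in `ℓ^(1/q)` on `ℝ × ℝ`, applied to the vectors `(u i ^ q, v i ^ q)`
  have key := norm_sum_le s fun i => WithLp.toLp (ENNReal.ofReal q⁻¹) (u i ^ q, v i ^ q)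
  rw [← WithLp.toLp_sum, ← prod_mk_sum, ← Real.rpow_inv_rpow hU hq0.ne',
    ← Real.rpow_inv_rpow hV hq0.ne',
    norm_toLp (Real.rpow_nonneg hU _) (Real.rpow_nonneg hV _),
    Finset.sum_congr rfl fun i hi => norm_toLp (hu i hi) (hv i hi)] at key
  rwa [Real.le_rpow_inv_iff_of_pos (add_nonneg (Real.rpow_nonneg hU _) (Real.rpow_nonneg hV _))
    (Finset.sum_nonneg fun i hi => Real.rpow_nonneg (add_nonneg (hu i hi) (hv i hi)) q) hq0]

theorem norm_add_sq_add_mul_norm_sub_sq_rpow_le {E : Type*} [NormedAddCommGroup E]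
    [InnerProductSpace ℝ E] {p : ℝ} (hp1 : 1 ≤ p) (hp2 : p ≤ 2) (a b : E) :
    (‖a + b‖ ^ 2 + (p - 1) / 2 * ‖a - b‖ ^ 2) ^ (p / 2) ≤ 2 ^ (p - 1) * (‖a‖ ^ p + ‖b‖ ^ p) := by
  have hpar := parallelogram_law_with_norm ℝ a b
  have htri : ‖a + b‖ ^ 2 ≤ (‖a‖ + ‖b‖) ^ 2 :=
    pow_le_pow_left₀ (norm_nonneg _) (norm_add_le a b) 2
  -- the parallelogram law trades `‖a - b‖²` for `‖a + b‖²`, and `‖a + b‖ ≤ ‖a‖ + ‖b‖`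
  have hle : ‖a + b‖ ^ 2 + (p - 1) / 2 * ‖a - b‖ ^ 2 ≤
      (‖a‖ + ‖b‖) ^ 2 + (p - 1) / 2 * (‖a‖ - ‖b‖) ^ 2 := by
    nlinarith [mul_le_mul_of_nonneg_left htri (show 0 ≤ 1 - (p - 1) / 2 by linarith)]
  exact (Real.rpow_le_rpow (by nlinarith [norm_nonneg (a - b)]) hle (by linarith)).trans
    (add_sq_add_mul_sub_sq_rpow_le hp1 hp2 (norm_nonneg a) (norm_nonneg b))

section Superball

variable {n : ℕ}

def superBlock (k : ℕ → ℕ) (j : ℕ) : (Fin n → ℝ) →ₗ[ℝ] EuclideanSpace ℝ (Fin n) where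
  toFun x := WithLp.toLp 2 fun i => if k j ≤ (i : ℕ) ∧ (i : ℕ) < k (j + 1) then x i else 0
  map_add' x y := by ext i; by_cases h : k j ≤ (i : ℕ) ∧ (i : ℕ) < k (j + 1) <;> simp [h]
  map_smul' c x := by ext i; by_cases h : k j ≤ (i : ℕ) ∧ (i : ℕ) < k (j + 1) <;> simp [h]

theorem superNorm_eq (p : ℝ) (m : ℕ) (k : ℕ → ℕ) (x : Fin n → ℝ) :
    superNorm p m k x = (∑ j ∈ Finset.range m, ‖superBlock k j x‖ ^ p) ^ (1 / p) := by
  unfold superNorm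
  congr! with j - i
  rw [EuclideanSpace.norm_eq]
  congr! 2 with i
  simp only [superBlock, LinearMap.coe_mk, AddHom.coe_mk, PiLp.toLp_apply, Real.norm_eq_abs,
    sq_abs]
  split_ifs <;> simp

variable {p : ℝ} {m : ℕ} {k : ℕ → ℕ}

theorem superNorm_nonneg (x : Fin n → ℝ) : 0 ≤ superNorm p m k x :=
  superNorm_eq p m k x ▸ Real.rpow_nonneg (Finset.sum_nonneg fun _ _ => by positivity) _

theorem superNorm_rpow (hp : p ≠ 0) (x : Fin n → ℝ) :
    superNorm p m k x ^ p = ∑ j ∈ Finset.range m, ‖superBlock k j x‖ ^ p := by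
  rw [superNorm_eq, one_div, Real.rpow_inv_rpow (Finset.sum_nonneg fun _ _ => by positivity) hp]

theorem superNorm_smul (hp : 0 < p) {c : ℝ} (hc : 0 ≤ c) (x : Fin n → ℝ) :
    superNorm p m k (c • x) = c * superNorm p m k x := by
  simp_rw [superNorm_eq, map_smul, norm_smul, Real.norm_of_nonneg hc,
    Real.mul_rpow hc (norm_nonneg _), ← Finset.mul_sum]
  rw [Real.mul_rpow (by positivity) (Finset.sum_nonneg fun _ _ => by positivity),
    ← Real.rpow_mul hc, mul_one_div_cancel hp.ne', Real.rpow_one]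

theorem superNorm_add_sq_add_mul_superNorm_sub_sq_rpow_le (hp1 : 1 ≤ p) (hp2 : p ≤ 2)
    (x y : Fin n → ℝ) :
    (superNorm p m k (x + y) ^ 2 + (p - 1) / 2 * superNorm p m k (x - y) ^ 2) ^ (p / 2) ≤
      2 ^ (p - 1) * (superNorm p m k x ^ p + superNorm p m k y ^ p) := by
  have hp0 : 0 < p := by linarith
  have hK : 0 ≤ (p - 1) / 2 := by linarith
  set a := fun j => ‖superBlock k j (x + y)‖ ^ 2
  set b := fun j => (p - 1) / 2 * ‖superBlock k j (x - y)‖ ^ 2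
  have ha : ∑ j ∈ Finset.range m, a j ^ (p / 2) = (superNorm p m k (x + y) ^ 2) ^ (p / 2) := by
    simp only [a, sq_rpow_div_two (norm_nonneg _), sq_rpow_div_two (superNorm_nonneg _),
      superNorm_rpow hp0.ne']
  have hb : ∑ j ∈ Finset.range m, b j ^ (p / 2) =
      ((p - 1) / 2 * superNorm p m k (x - y) ^ 2) ^ (p / 2) := by
    simp only [b, Real.mul_rpow hK (sq_nonneg _), sq_rpow_div_two (norm_nonneg _),
      sq_rpow_div_two (superNorm_nonneg _), superNorm_rpow hp0.ne', Finset.mul_sum]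
  have hsum : ∑ j ∈ Finset.range m, (a j + b j) ^ (p / 2) ≤
      2 ^ (p - 1) * (superNorm p m k x ^ p + superNorm p m k y ^ p) := by
    rw [superNorm_rpow hp0.ne', superNorm_rpow hp0.ne', ← Finset.sum_add_distrib, Finset.mul_sum]
    refine Finset.sum_le_sum fun j _ => ?_
    simpa only [a, b, map_add, map_sub]
      using norm_add_sq_add_mul_norm_sub_sq_rpow_le hp1 hp2 (superBlock k j x) (superBlock k j y)
  have hmin := Real.add_Lp_le_Lp_add_of_le_one (Finset.range m) (q := p / 2) (by positivity)
    (by linarith) (u := a) (v := b) (fun j _ => by positivity) (fun j _ => by positivity)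
  rw [ha, hb, Real.rpow_rpow_inv (by positivity) (by positivity),
    Real.rpow_rpow_inv (by positivity) (by positivity),
    Real.le_rpow_inv_iff_of_pos (by positivity)
      (Finset.sum_nonneg fun j _ => by positivity) (by positivity)] at hmin
  exact hmin.trans hsum

theorem norm_superBlock_le_superNorm (hp : 0 < p) (x : Fin n → ℝ) {j : ℕ} (hj : j < m) :
    ‖superBlock k j x‖ ≤ superNorm p m k x := by
  rw [← Real.rpow_le_rpow_iff (norm_nonneg _) (superNorm_nonneg x) hp, superNorm_rpow hp.ne']
  exact Finset.single_le_sum (f := fun j => ‖superBlock k j x‖ ^ p)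
    (fun _ _ => by positivity) (Finset.mem_range.2 hj)

theorem abs_le_superNorm (hp : 0 < p) (hk : IsBlockDecomp n m k) (x : Fin n → ℝ) (i : Fin n) :
    |x i| ≤ superNorm p m k x := by
  obtain ⟨hm, hk0, hkm, -⟩ := hk
  -- the block containing `i` is the first `j` with `i < k (j + 1)`
  have hex : ∃ j, (i : ℕ) < k (j + 1) := ⟨m - 1, by rw [Nat.sub_add_cancel hm, hkm]; exact i.2⟩
  set j := Nat.find hex
  have hjm : j < m := by
    have := Nat.find_min' hex
      (show (i : ℕ) < k (m - 1 + 1) by rw [Nat.sub_add_cancel hm, hkm]; exact i.2)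
    omega
  have hij : k j ≤ i := by
    by_contra! hlt
    have hj0 : j ≠ 0 := by rintro h; rw [h, hk0] at hlt; omega
    have := Nat.find_min' hex
      (show (i : ℕ) < k (j - 1 + 1) by rwa [Nat.sub_add_cancel (Nat.pos_of_ne_zero hj0)])
    omega
  have hji : (i : ℕ) < k (j + 1) := Nat.find_spec hex
  calc |x i| = |superBlock k j x i| := by simp [superBlock, hij, hji]
    _ ≤ ‖superBlock k j x‖ := by
      simpa only [Real.norm_eq_abs] using PiLp.norm_apply_le (superBlock k j x) i
    _ ≤ superNorm p m k x := norm_superBlock_le_superNorm hp x hjm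

theorem superNorm_sub_half_smul_sq_add_le (hp1 : 1 ≤ p) (hp2 : p ≤ 2) {y u : Fin n → ℝ} {R : ℝ}
    (hy : superNorm p m k y ≤ R) (hyu : superNorm p m k (y - u) ≤ R) :
    superNorm p m k (y - (2⁻¹ : ℝ) • u) ^ 2 + (p - 1) / 8 * superNorm p m k u ^ 2 ≤ R ^ 2 := by
  have hp0 : 0 < p := by linarith
  have hR : 0 ≤ R := (superNorm_nonneg y).trans hy
  have h := superNorm_add_sq_add_mul_superNorm_sub_sq_rpow_le (m := m) (k := k) hp1 hp2 y (y - u)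
  have hbound : 2 ^ (p - 1) * (superNorm p m k y ^ p + superNorm p m k (y - u) ^ p) ≤
      ((2 * R) ^ 2) ^ (p / 2) := by
    rw [sq_rpow_div_two (by positivity), Real.mul_rpow zero_le_two hR,
      Real.rpow_sub_one two_ne_zero]
    have := Real.rpow_le_rpow (superNorm_nonneg _) hy hp0.le
    have := Real.rpow_le_rpow (superNorm_nonneg _) hyu hp0.le
    nlinarith [Real.rpow_pos_of_pos two_pos p]
  have h2 := (Real.rpow_le_rpow_iff (by positivity) (by positivity) (by positivity)).1
    (h.trans hbound)
  rw [sub_sub_cancel, show y + (y - u) = (2 : ℝ) • (y - (2⁻¹ : ℝ) • u) by module,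
    superNorm_smul hp0 zero_le_two] at h2
  linear_combination h2 / 4

theorem exists_inter_superBall_subset (hp1 : 1 ≤ p) (hp2 : p ≤ 2) {κ : ℝ} (hκ0 : 0 ≤ κ)
    (hκ : 1 ≤ κ ^ 2 * (1 + (p - 1) / 8)) {u : Fin n → ℝ} {R : ℝ} (hu : superNorm p m k u ≤ R) :
    ∃ z, superBall p m k u R ∩ superBall p m k 0 (superNorm p m k u) ⊆
      superBall p m k z (κ * R) := by
  have hR : 0 ≤ R := (superNorm_nonneg u).trans hu
  by_cases hsmall : superNorm p m k u ≤ κ * R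
  · exact ⟨0, fun y hy => hy.2.trans hsmall⟩
  -- otherwise the intersection lies near `u / 2`, by uniform convexity
  refine ⟨(2⁻¹ : ℝ) • u, fun y ⟨hyu, hy⟩ => ?_⟩
  simp only [superBall, mem_ofPred_eq, sub_zero] at hyu hy ⊢
  have h := superNorm_sub_half_smul_sq_add_le hp1 hp2 (hy.trans hu) hyu
  have hu2 : (κ * R) ^ 2 ≤ superNorm p m k u ^ 2 :=
    pow_le_pow_left₀ (by positivity) (not_le.1 hsmall).le 2
  refine (pow_le_pow_iff_left₀ (superNorm_nonneg _) (by positivity) two_ne_zero).1 ?_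
  nlinarith [mul_le_mul_of_nonneg_left hu2 (show 0 ≤ (p - 1) / 8 by linarith)]

theorem superBall_zero_mul (hp : 0 < p) {a : ℝ} (ha : 0 < a) (R : ℝ) :
    superBall p m k (0 : Fin n → ℝ) (a * R) = a • superBall p m k 0 R := by
  ext y
  rw [mem_smul_set_iff_inv_smul_mem₀ ha.ne']
  simp only [superBall, mem_ofPred_eq, sub_zero]
  rw [superNorm_smul hp (inv_nonneg.2 ha.le), inv_mul_le_iff₀ ha]

theorem volume_superBall_center (z : Fin n → ℝ) (R : ℝ) :
    volume (superBall p m k z R) = volume (superBall p m k (0 : Fin n → ℝ) R) := by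
  have : superBall p m k z R = (· + -z) ⁻¹' superBall p m k 0 R := by
    ext y
    simp [superBall, sub_eq_add_neg]
  rw [this, measure_preimage_add_right]

theorem volume_superBall_mul (hp : 0 < p) {a : ℝ} (ha : 0 < a) (z : Fin n → ℝ) (R : ℝ) :
    volume (superBall p m k z (a * R)) =
      ENNReal.ofReal (a ^ n) * volume (superBall p m k (0 : Fin n → ℝ) R) := by
  rw [volume_superBall_center, superBall_zero_mul hp ha, Measure.addHaar_smul_of_nonneg _ ha.le,
    Module.finrank_fin_fun]

theorem volume_superBall_lt_top (hp : 0 < p) (hk : IsBlockDecomp n m k) (z : Fin n → ℝ)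
    (R : ℝ) :
    volume (superBall p m k z R) < ⊤ := by
  rw [volume_superBall_center]
  refine (measure_mono fun y hy => ?_).trans_lt (measure_closedBall_lt_top (x := 0) (r := R))
  simp only [superBall, mem_ofPred_eq, sub_zero] at hy
  rw [mem_closedBall_zero_iff, pi_norm_le_iff_of_nonneg ((superNorm_nonneg y).trans hy)]
  exact fun i => (abs_le_superNorm hp hk y i).trans hy

end Superball

/-- **Key geometric lemma (inside Lemma 9): intersection volume of two superballs.**
For every `p ∈ (1, 2]` there is a constant `c_p ∈ (0, 2)`, independent of the dimension
and of the block decomposition, such that for every `n`, every block decomposition `k` of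
`{1, …, n}`, every `r > 0`, and every `u` with `‖u‖_{p,k,n} ≤ 2r`:
`vol(B(u, 2r) ∩ B(0, ‖u‖)) ≤ (c_p/2)^n · vol(B(0, 2r))`. -/
theorem superball_intersection_volume_bound (p : ℝ) (hp1 : 1 < p) (hp2 : p ≤ 2) :
    ∃ c : ℝ, 0 < c ∧ c < 2 ∧
      ∀ n m : ℕ, ∀ k : ℕ → ℕ, IsBlockDecomp n m k → ∀ r : ℝ, 0 < r →
        ∀ u : Fin n → ℝ, superNorm p m k u ≤ 2 * r →
          (volume (superBall p m k u (2 * r) ∩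
              superBall p m k (0 : Fin n → ℝ) (superNorm p m k u))).toReal ≤
            (c / 2) ^ n * (volume (superBall p m k (0 : Fin n → ℝ) (2 * r))).toReal := by
  set κ := (√(1 + (p - 1) / 8))⁻¹
  have hκ0 : 0 < κ := by positivity
  have hκ1 : κ < 1 := inv_lt_one_of_one_lt₀ (Real.lt_sqrt zero_le_one |>.2 (by linarith))
  have hκ : κ ^ 2 * (1 + (p - 1) / 8) = 1 := by
    rw [inv_pow, Real.sq_sqrt (by linarith), inv_mul_cancel₀ (by linarith)]
  refine ⟨2 * κ, by positivity, by linarith, fun n m k hk r _ u hu => ?_⟩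
  obtain ⟨z, hz⟩ := exists_inter_superBall_subset hp1.le hp2 hκ0.le hκ.ge hu
  rw [mul_div_cancel_left₀ κ two_ne_zero]
  calc _ ≤ (volume (superBall p m k z (κ * (2 * r)))).toReal :=
        ENNReal.toReal_mono (volume_superBall_lt_top (by linarith) hk z _).ne (measure_mono hz)
    _ = κ ^ n * (volume (superBall p m k (0 : Fin n → ℝ) (2 * r))).toReal := by
        rw [volume_superBall_mul (by linarith) hκ0, ENNReal.toReal_mul,
          ENNReal.toReal_ofReal (by positivity)]
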